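/- Consider three nodes a, b, c on a line-tree a→b→c with β = 0 and equal positive initial energies E_a(0) = E_b(0) = E_c(0). Suppose at each time step t ≥ 1 either the pair (a,b) or the pair (b,c) interacts under the 2-exchange rule with the exact equilibrium condition (energy is redistributed within the pair, preserving their sum, so that afterwards the parent has exactly twice the energy of the child, whenever equality did not already hold). Then there is no time t at which both E_a(t) = 2·E_b(t) and E_b(t) = 2·E_c(t) hold. -/
import Mathlib


theorem stmt9 (Ea Eb Ec : ℕ → ℝ) (h0 : 0 < Ea 0) (hab : Ea 0 = Eb 0) (hbc : Eb 0 = Ec 0)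
    (hstep : ∀ t,
      (Ec (t+1) = Ec t ∧
        ((Ea t = 2 * Eb t ∧ Ea (t+1) = Ea t ∧ Eb (t+1) = Eb t) ∨
         (Ea t ≠ 2 * Eb t ∧ Ea (t+1) = 2/3 * (Ea t + Eb t) ∧
            Eb (t+1) = 1/3 * (Ea t + Eb t)))) ∨
      (Ea (t+1) = Ea t ∧
        ((Eb t = 2 * Ec t ∧ Eb (t+1) = Eb t ∧ Ec (t+1) = Ec t) ∨
         (Eb t ≠ 2 * Ec t ∧ Eb (t+1) = 2/3 * (Eb t + Ec t) ∧
            Ec (t+1) = 1/3 * (Eb t + Ec t))))) :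
    ∀ t, ¬ (Ea t = 2 * Eb t ∧ Eb t = 2 * Ec t) := by
  have hsum : ∀ s, Ea s + Eb s + Ec s = 3 * Ea 0 := by
    intro s
    induction s with
    | zero => rw [← hab, ← hbc, ← hab]; ring
    | succ n ih =>
      rcases hstep n with ⟨hc, h⟩ | ⟨ha, h⟩
      · rcases h with ⟨_, e1, e2⟩ | ⟨_, e1, e2⟩ <;> rw [e1, e2, hc] <;> linarith
      · rcases h with ⟨_, e1, e2⟩ | ⟨_, e1, e2⟩ <;> rw [ha, e1, e2] <;> linarith
  have htri : ∀ s, ∃ k na nb nc : ℕ, (3:ℝ)^k * Ea s = na * Ea 0 ∧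
      (3:ℝ)^k * Eb s = nb * Ea 0 ∧ (3:ℝ)^k * Ec s = nc * Ea 0 := by
    intro s
    induction s with
    | zero => exact ⟨0, 1, 1, 1, by simp, by simp [← hab], by simp [← hab, ← hbc]⟩
    | succ n ih =>
      obtain ⟨k, na, nb, nc, pa, pb, pc⟩ := ih
      rcases hstep n with ⟨hc, h⟩ | ⟨ha, h⟩
      · rcases h with ⟨_, e1, e2⟩ | ⟨_, e1, e2⟩
        · exact ⟨k, na, nb, nc, by rw [e1]; exact pa, by rw [e2]; exact pb,
            by rw [hc]; exact pc⟩
        · refine ⟨k+1, 2*(na+nb), na+nb, 3*nc, ?_, ?_, ?_⟩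
          · rw [e1]; push_cast; linear_combination 2*pa + 2*pb
          · rw [e2]; push_cast; linear_combination pa + pb
          · rw [hc]; push_cast; linear_combination (3:ℝ)*pc
      · rcases h with ⟨_, e1, e2⟩ | ⟨_, e1, e2⟩
        · exact ⟨k, na, nb, nc, by rw [ha]; exact pa, by rw [e1]; exact pb,
            by rw [e2]; exact pc⟩
        · refine ⟨k+1, 3*na, 2*(nb+nc), nb+nc, ?_, ?_, ?_⟩
          · rw [ha]; push_cast; linear_combination (3:ℝ)*pa
          · rw [e1]; push_cast; linear_combination 2*pb + 2*pc
          · rw [e2]; push_cast; linear_combination pb + pc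
  rintro t ⟨h1, h2⟩
  obtain ⟨k, na, nb, nc, pa, pb, pc⟩ := htri t
  have hs := hsum t
  have h7 : 7 * Ec t = 3 * Ea 0 := by rw [h2] at h1; linarith
  have hcast : (7 * nc : ℝ) = 3^(k+1) := by
    have h2' : (7 * nc : ℝ) * Ea 0 = 3^(k+1) * Ea 0 := by
      linear_combination (3:ℝ)^k * h7 - 7 * pc
    exact mul_right_cancel₀ (ne_of_gt h0) h2'
  have hn : 7 * nc = 3^(k+1) := by exact_mod_cast hcast
  have hdvd : (7:ℕ) ∣ 3^(k+1) := ⟨nc, hn.symm⟩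
  have := Nat.Prime.dvd_of_dvd_pow (by norm_num) hdvd
  omega
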